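/- Let w : ℝ → [0,∞) be differentiable with continuous derivative w', and let A ≥ 0 be a constant such that w'(x) − w'(y) ≤ A(x − y) for all x ≥ y (i.e., the second derivative of w is bounded above by A in the one-sided difference-quotient sense). Then the function √w is Lipschitz with Lip √w ≤ √A. -/

import Mathlib

open Set

noncomputable section

/-- If `w : ℝ → [0,∞)` is differentiable with continuous derivative
and `w'(x) - w'(y) ≤ A (x - y)` for all `x ≥ y` (one-sided second-derivative bound),
then `√w` is Lipschitz with constant `√A`. -/
theorem root_lipschitz_of_second_deriv_bound
    (w : ℝ → ℝ) (hnn : ∀ x : ℝ, 0 ≤ w x)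
    (hdiff : Differentiable ℝ w) (hcont : Continuous (deriv w))
    (A : ℝ) (hA : 0 ≤ A)
    (hsec : ∀ x y : ℝ, y ≤ x → deriv w x - deriv w y ≤ A * (x - y)) :
    LipschitzWith (Real.sqrt A).toNNReal (fun x => Real.sqrt (w x)) := by
  -- Step 1: Taylor-type bound : w(z) ≤ w(y) + w'(y)(z-y) + A(z-y)^2
  have taylor : ∀ y z : ℝ, w z ≤ w y + deriv w y * (z - y) + A * (z - y) ^ 2 := by
    intro y z
    rcases lt_trichotomy y z with h | h | h
    · obtain ⟨c, hc, hceq⟩ := exists_deriv_eq_slope w h (hdiff.continuous.continuousOn)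
        (hdiff.differentiableOn)
      rw [eq_div_iff (sub_ne_zero.mpr h.ne')] at hceq
      have h1 : deriv w c ≤ deriv w y + A * (z - y) := by
        have := hsec c y hc.1.le
        have hcy : c - y ≤ z - y := by linarith [hc.2]
        nlinarith
      nlinarith
    · subst h; nlinarith
    · obtain ⟨c, hc, hceq⟩ := exists_deriv_eq_slope w h (hdiff.continuous.continuousOn)
        (hdiff.differentiableOn)
      rw [eq_div_iff (sub_ne_zero.mpr h.ne')] at hceq
      have h1 : deriv w y + A * (z - y) ≤ deriv w c := by
        have := hsec y c hc.2.le
        nlinarith [hc.1]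
      nlinarith
  -- Step 2: (w')^2 ≤ 4 A w
  have key : ∀ y : ℝ, (deriv w y) ^ 2 ≤ 4 * A * w y := by
    intro y
    have hq : ∀ t : ℝ, 0 ≤ A * (t * t) + deriv w y * t + w y := by
      intro t
      have := taylor y (y + t)
      have h0 := hnn (y + t)
      nlinarith
    have := discrim_le_zero hq
    rw [discrim] at this
    nlinarith
  -- Step 3: for ε > 0, x ↦ √(w x + ε) is Lipschitz with √A
  have step3 : ∀ ε : ℝ, 0 < ε →
      LipschitzWith (Real.sqrt A).toNNReal (fun x => Real.sqrt (w x + ε)) := by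
    intro ε hε
    have hpos : ∀ x, 0 < w x + ε := fun x => by linarith [hnn x]
    have hder : ∀ x, HasDerivAt (fun x => Real.sqrt (w x + ε))
        (deriv w x / (2 * Real.sqrt (w x + ε))) x := by
      intro x
      have h1 : HasDerivAt (fun x => w x + ε) (deriv w x) x :=
        ((hdiff x).hasDerivAt).add_const ε
      have := (Real.hasDerivAt_sqrt (hpos x).ne').comp x h1
      convert this using 1
      · rfl
      · rfl
      · rfl
      ring
    apply lipschitzWith_of_nnnorm_deriv_le (fun x => (hder x).differentiableAt)
    intro x
    rw [(hder x).deriv]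
    rw [← NNReal.coe_le_coe]
    push_cast
    rw [Real.coe_toNNReal _ (Real.sqrt_nonneg A)]
    have hsp : 0 < Real.sqrt (w x + ε) := Real.sqrt_pos.2 (hpos x)
    rw [Real.norm_eq_abs, abs_div, div_le_iff₀ (by rw [abs_of_nonneg (by linarith)]; linarith)]
    have hs : Real.sqrt (w x + ε) ^ 2 = w x + ε := Real.sq_sqrt (hpos x).le
    have hAs : Real.sqrt A ^ 2 = A := Real.sq_sqrt hA
    have h4 : (deriv w x) ^ 2 ≤ 4 * A * (w x + ε) := by nlinarith [key x, hε]
    have hcalc : |deriv w x| ≤ 2 * Real.sqrt A * Real.sqrt (w x + ε) := by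
      calc |deriv w x| = Real.sqrt ((deriv w x) ^ 2) := (Real.sqrt_sq_eq_abs _).symm
        _ ≤ Real.sqrt ((2 * Real.sqrt A * Real.sqrt (w x + ε)) ^ 2) := by
            apply Real.sqrt_le_sqrt; nlinarith
        _ = 2 * Real.sqrt A * Real.sqrt (w x + ε) := Real.sqrt_sq (by positivity)
    rw [abs_of_nonneg (by linarith : (0:ℝ) ≤ 2 * Real.sqrt (w x + ε))]
    nlinarith [Real.sqrt_nonneg A]
  -- Step 4: conclude by letting ε → 0
  apply LipschitzWith.of_dist_le_mul
  intro x y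
  rw [Real.dist_eq, Real.dist_eq, Real.coe_toNNReal _ (Real.sqrt_nonneg A)]
  refine le_of_forall_pos_le_add ?_
  intro δ hδ
  set ε := (δ / 2) ^ 2 with hεdef
  have hε : (0:ℝ) < ε := by positivity
  have hlip := (step3 ε hε).dist_le_mul x y
  rw [Real.dist_eq, Real.dist_eq, Real.coe_toNNReal _ (Real.sqrt_nonneg A)] at hlip
  have hclose : ∀ z : ℝ, |Real.sqrt (w z + ε) - Real.sqrt (w z)| ≤ δ / 2 := by
    intro z
    have h1 : Real.sqrt (w z) ≤ Real.sqrt (w z + ε) := by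
      apply Real.sqrt_le_sqrt; linarith
    rw [abs_of_nonneg (by linarith)]
    have h3 : w z + ε ≤ (Real.sqrt (w z) + δ / 2) ^ 2 := by
      nlinarith [Real.sq_sqrt (hnn z), Real.sqrt_nonneg (w z)]
    have h2 : Real.sqrt (w z + ε) ≤ Real.sqrt (w z) + δ / 2 := by
      calc Real.sqrt (w z + ε) ≤ Real.sqrt ((Real.sqrt (w z) + δ / 2) ^ 2) :=
            Real.sqrt_le_sqrt h3
        _ = Real.sqrt (w z) + δ / 2 := Real.sqrt_sq (by positivity)
    linarith
  have t1 : |Real.sqrt (w x) - Real.sqrt (w y)| ≤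
      |Real.sqrt (w x) - Real.sqrt (w x + ε)| + |Real.sqrt (w x + ε) - Real.sqrt (w y + ε)|
        + |Real.sqrt (w y + ε) - Real.sqrt (w y)| := by
    have a1 := abs_sub_le (Real.sqrt (w x)) (Real.sqrt (w x + ε)) (Real.sqrt (w y))
    have a2 := abs_sub_le (Real.sqrt (w x + ε)) (Real.sqrt (w y + ε)) (Real.sqrt (w y))
    linarith
  have h1 := hclose x
  have h2 := hclose y
  rw [abs_sub_comm] at h1
  linarith
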